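/- In the racbox-simulation setting, suppose perfect PR-correlations hold: a ⊕ b = x ∧ y at every point of positive probability. Then the mutual information of b̃ with Bob's guessing targets is maximal: computing entropic quantities with respect to the conditional distribution given the event y = true (respectively y = false), which has probability 1/2, one has I(b̃ : a ⊕ x | (ỹ, s); given y = true) = H(a ⊕ x | (ỹ, s); given y = true) and I(b̃ : a | (ỹ, s); given y = false) = H(a | (ỹ, s); given y = false). -/

import Mathlib

open scoped Classical

/-- A probability mass function on a finite type. -/
def IsPMF {Ω : Type*} [Fintype Ω] (P : Ω → ℝ) : Prop :=
  (∀ ω, 0 ≤ P ω) ∧ ∑ ω, P ω = 1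

/-- Probability of an event under a pmf. -/
noncomputable def Pr {Ω : Type*} [Fintype Ω] (P : Ω → ℝ) (E : Ω → Prop) : ℝ :=
  ∑ ω, if E ω then P ω else 0

/-- Shannon entropy (in bits) of a random variable `X` under pmf `P`,
with the convention `0 · log₂ 0 = 0`. -/
noncomputable def ent {Ω α : Type*} [Fintype Ω] [Fintype α]
    (P : Ω → ℝ) (X : Ω → α) : ℝ :=
  -∑ v : α, Pr P (fun ω => X ω = v) * Real.logb 2 (Pr P (fun ω => X ω = v))

/-- Conditional entropy `H(X|Y) = H(X,Y) - H(Y)`. -/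
noncomputable def condEnt {Ω α β : Type*} [Fintype Ω] [Fintype α] [Fintype β]
    (P : Ω → ℝ) (X : Ω → α) (Y : Ω → β) : ℝ :=
  ent P (fun ω => (X ω, Y ω)) - ent P Y

/-- Mutual information `I(X:Y) = H(X) + H(Y) - H(X,Y)`. -/
noncomputable def mutInf {Ω α β : Type*} [Fintype Ω] [Fintype α] [Fintype β]
    (P : Ω → ℝ) (X : Ω → α) (Y : Ω → β) : ℝ :=
  ent P X + ent P Y - ent P (fun ω => (X ω, Y ω))

/-- Conditional mutual information
`I(X:Y|Z) = H(X,Z) + H(Y,Z) - H(X,Y,Z) - H(Z)`. -/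
noncomputable def condMutInf {Ω α β γ : Type*} [Fintype Ω] [Fintype α] [Fintype β] [Fintype γ]
    (P : Ω → ℝ) (X : Ω → α) (Y : Ω → β) (Z : Ω → γ) : ℝ :=
  ent P (fun ω => (X ω, Z ω)) + ent P (fun ω => (Y ω, Z ω))
    - ent P (fun ω => (X ω, Y ω, Z ω)) - ent P Z

/-- The pmf conditioned on an event `E`. -/
noncomputable def condPmf {Ω : Type*} [Fintype Ω] (P : Ω → ℝ) (E : Ω → Prop) : Ω → ℝ :=
  fun ω => if E ω then P ω / Pr P E else 0

/-
The guessing targets are functions of Bob's data: given `y = true` the PR condition reads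
`a ⊕ b = x`, so `a ⊕ x = b`, and given `y = false` it reads `a = b`; in both cases the target
equals `B (ỹ, b̃, s, y)` with `y` fixed. A variable `T` that is a function of `b̃` and `(ỹ, s)`
on the support has `H(b̃, T, (ỹ, s)) = H(b̃, (ỹ, s))`, and then the defining formula of
`I(b̃ : T | (ỹ, s))` collapses to `H(T, (ỹ, s)) - H(ỹ, s) = H(T | (ỹ, s))`.
-/

section Entropy

variable {Ω α β γ : Type*} [Fintype Ω] [Fintype α] [Fintype β] [Fintype γ]

lemma Pr_congr {Q : Ω → ℝ} {E E' : Ω → Prop} (h : ∀ ω, Q ω ≠ 0 → (E ω ↔ E' ω)) :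
    Pr Q E = Pr Q E' := by
  refine Finset.sum_congr rfl fun ω _ => ?_
  by_cases hω : Q ω = 0
  · simp [hω]
  · simp only [h ω hω]

lemma Pr_eq_zero {Q : Ω → ℝ} {E : Ω → Prop} (h : ∀ ω, Q ω ≠ 0 → ¬E ω) : Pr Q E = 0 := by
  rw [Pr_congr (E' := fun _ => False) fun ω hω => iff_false_intro (h ω hω)]
  simp [Pr]

lemma ent_eq_of_eq_comp {Q : Ω → ℝ} {U : Ω → α} {V : Ω → β} {f : α → β}
    (hf : Function.Injective f) (h : ∀ ω, Q ω ≠ 0 → V ω = f (U ω)) :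
    ent Q V = ent Q U := by
  unfold ent
  congr 1
  refine (Fintype.sum_of_injective f hf _ _ (fun v hv => ?_) fun u => ?_).symm
  · rw [Pr_eq_zero fun ω hω hV => hv ⟨U ω, (hV ▸ h ω hω).symm⟩, zero_mul]
  · rw [Pr_congr (E := fun ω => V ω = f u) (E' := fun ω => U ω = u)
      fun ω hω => by rw [h ω hω, hf.eq_iff]]

lemma condMutInf_eq_condEnt_of_eq_comp {Q : Ω → ℝ} {X : Ω → α} {Y : Ω → β} {Z : Ω → γ}
    {g : α → γ → β} (h : ∀ ω, Q ω ≠ 0 → Y ω = g (X ω) (Z ω)) :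
    condMutInf Q X Y Z = condEnt Q Y Z := by
  have hXYZ : ent Q (fun ω => (X ω, Y ω, Z ω)) = ent Q (fun ω => (X ω, Z ω)) :=
    ent_eq_of_eq_comp (f := fun p : α × γ => (p.1, g p.1 p.2, p.2))
      (fun p q hpq => by
        simp only [Prod.mk.injEq] at hpq
        exact Prod.ext hpq.1 hpq.2.2)
      fun ω hω => by rw [h ω hω]
  rw [condMutInf, condEnt, hXYZ]
  ring

lemma ne_zero_of_condPmf_ne_zero {P : Ω → ℝ} {E : Ω → Prop} {ω : Ω}
    (h : condPmf P E ω ≠ 0) : P ω ≠ 0 ∧ E ω := by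
  unfold condPmf at h
  split_ifs at h with hE
  · exact ⟨(div_ne_zero_iff.1 h).1, hE⟩
  · exact absurd rfl h

end Entropy

theorem pr_simulation_max_condMutInf_general
    {Ω S : Type*} [Fintype Ω] [Fintype S]
    (P : Ω → ℝ) (hP : IsPMF P)
    (x y : Ω → Bool) (s : Ω → S)
    (B : Bool × Bool × S × Bool → Bool)
    (a yt bt b : Ω → Bool)
    (hb : ∀ ω, b ω = B (yt ω, bt ω, s ω, y ω))
    (hPR : ∀ ω, 0 < P ω → xor (a ω) (b ω) = (x ω && y ω)) :
    condMutInf (condPmf P (fun ω => y ω = true))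
        bt (fun ω => xor (a ω) (x ω)) (fun ω => (yt ω, s ω))
      = condEnt (condPmf P (fun ω => y ω = true))
          (fun ω => xor (a ω) (x ω)) (fun ω => (yt ω, s ω)) ∧
    condMutInf (condPmf P (fun ω => y ω = false))
        bt a (fun ω => (yt ω, s ω))
      = condEnt (condPmf P (fun ω => y ω = false))
          a (fun ω => (yt ω, s ω)) := by
  have hPR_on {vy : Bool} {ω : Ω} (hω : condPmf P (fun ω => y ω = vy) ω ≠ 0) :
      xor (a ω) (B (yt ω, bt ω, s ω, vy)) = (x ω && vy) := by
    obtain ⟨hPω, hy⟩ := ne_zero_of_condPmf_ne_zero hω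
    rw [← hy, ← hb]
    exact hPR ω ((hP.1 ω).lt_of_ne' hPω)
  constructor
  · refine condMutInf_eq_condEnt_of_eq_comp (g := fun c w => B (w.1, c, w.2, true))
      fun ω hω => ?_
    rw [← Bool.and_true (x ω), ← hPR_on hω, ← Bool.xor_assoc, Bool.xor_self, Bool.false_xor]
  · refine condMutInf_eq_condEnt_of_eq_comp (g := fun c w => B (w.1, c, w.2, false))
      fun ω hω => ?_
    simpa using hPR_on hω

/-- **Lemma 4.** In the racbox-simulation setting, if perfect PR-correlations
`a ⊕ b = x ∧ y` hold at every point of positive probability, then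
`I(b̃ : a ⊕ x | (ỹ, s))` computed given `y = true` equals
`H(a ⊕ x | (ỹ, s))` given `y = true`, and
`I(b̃ : a | (ỹ, s))` computed given `y = false` equals
`H(a | (ỹ, s))` given `y = false`. -/
theorem pr_simulation_max_condMutInf
    {Ω S : Type*} [Fintype Ω] [Fintype S]
    (P : Ω → ℝ) (hP : IsPMF P)
    (x y z : Ω → Bool) (s : Ω → S)
    (hindep : ∀ (vx vy vz : Bool) (vs : S),
      Pr P (fun ω => x ω = vx ∧ y ω = vy ∧ z ω = vz ∧ s ω = vs)
        = Pr P (fun ω => x ω = vx) * Pr P (fun ω => y ω = vy) *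
            Pr P (fun ω => z ω = vz) * Pr P (fun ω => s ω = vs))
    (hx : ∀ v, Pr P (fun ω => x ω = v) = 1/2)
    (hy : ∀ v, Pr P (fun ω => y ω = v) = 1/2)
    (hz : ∀ v, Pr P (fun ω => z ω = v) = 1/2)
    (A F0 F1 : Bool × Bool × S → Bool) (G : Bool × S → Bool)
    (B : Bool × Bool × S × Bool → Bool)
    (a yt bt b : Ω → Bool)
    (ha : ∀ ω, a ω = A (x ω, z ω, s ω))
    (hyt : ∀ ω, yt ω = G (y ω, s ω))
    (hbt : ∀ ω, bt ω = if yt ω then F1 (x ω, z ω, s ω) else F0 (x ω, z ω, s ω))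
    (hb : ∀ ω, b ω = B (yt ω, bt ω, s ω, y ω))
    (hPR : ∀ ω, 0 < P ω → xor (a ω) (b ω) = (x ω && y ω)) :
    condMutInf (condPmf P (fun ω => y ω = true))
        bt (fun ω => xor (a ω) (x ω)) (fun ω => (yt ω, s ω))
      = condEnt (condPmf P (fun ω => y ω = true))
          (fun ω => xor (a ω) (x ω)) (fun ω => (yt ω, s ω)) ∧
    condMutInf (condPmf P (fun ω => y ω = false))
        bt a (fun ω => (yt ω, s ω))
      = condEnt (condPmf P (fun ω => y ω = false))
          a (fun ω => (yt ω, s ω)) :=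
  pr_simulation_max_condMutInf_general P hP x y s B a yt bt b hb hPR
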